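/- arXiv:1912.06278 — 6 statements merged into one kernel-verified Lean document; each statement's English description precedes it below -/
import Mathlib

section
/- Let n ≤ 4 and let B = [b_1,…,b_n] be an SR-CVP reduced basis of a full-rank lattice Λ(B) in ℝ^n. Then the basis length satisfies l(B) := max_i ‖b_i‖ ≤ √(4n/(5−n)) · λ_n(B). -/
open Finset

noncomputable section

/-- `ℝ^n` with the Euclidean norm. -/
abbrev Euc (n : ℕ) := EuclideanSpace ℝ (Fin n)

/-- The lattice generated by the columns `B 1, …, B n`. -/
def lattice {n : ℕ} (B : Fin n → Euc n) : Set (Euc n) :=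
  {v | ∃ c : Fin n → ℤ, v = ∑ i, (c i : ℝ) • B i}

/-- The sublattice generated by all the columns of `B` except the `i`-th one. -/
def subLattice {n : ℕ} (B : Fin n → Euc n) (i : Fin n) : Set (Euc n) :=
  {v | ∃ c : Fin n → ℤ, c i = 0 ∧ v = ∑ j, (c j : ℝ) • B j}

/-- The `k`-th successive minimum `λ_k(B)` of the lattice generated by `B`. -/
def succMin {n : ℕ} (B : Fin n → Euc n) (k : ℕ) : ℝ :=
  sInf {r : ℝ | ∃ v : Fin k → Euc n, (∀ j, v j ∈ lattice B) ∧
    LinearIndependent ℝ v ∧ ∀ j, ‖v j‖ ≤ r}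

/-- `B` is SR-CVP reduced if no vector of the sublattice generated by the other basis
vectors can shorten a basis vector. -/
def SRCVPReduced {n : ℕ} (B : Fin n → Euc n) : Prop :=
  ∀ i : Fin n, ∀ s ∈ subLattice B i, ‖B i‖ ≤ ‖B i - s‖

/-!
Let `b_i` be a longest basis vector, `V` the span of the others and `d` the distance from `b_i`
to `V`. Among any `n` independent lattice vectors one has a nonzero integer coefficient `k` on
`b_i`, and then `b_i - v / k ∈ V`, so `d ≤ ‖v‖ / |k| ≤ λ_n`. Babai's rounding, applied to the
projection of `b_i` on `V`, gives `s` in the sublattice of the other vectors at squared distance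
at most `∑_{j ≠ i} ‖b_j‖² / 4 ≤ (n - 1) ‖b_i‖² / 4` from that projection. SR-CVP reducedness and
Pythagoras then give `‖b_i‖² ≤ ‖b_i - s‖² ≤ λ_n² + (n - 1) ‖b_i‖² / 4`, i.e.
`‖b_i‖² ≤ 4 λ_n² / (5 - n)`.
-/

open scoped RealInnerProductSpace

namespace Submodule

variable {E : Type*} [NormedAddCommGroup E] [InnerProductSpace ℝ E]
  (K : Submodule ℝ E) [K.HasOrthogonalProjection]

theorem norm_sub_sq_eq_of_mem (x : E) {y : E} (hy : y ∈ K) :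
    ‖x - y‖ ^ 2 = ‖x - K.starProjection x‖ ^ 2 + ‖K.starProjection x - y‖ ^ 2 := by
  have hperp : ⟪x - K.starProjection x, K.starProjection x - y⟫ = 0 :=
    inner_left_of_mem_orthogonal (K.sub_mem (K.starProjection_apply_mem x) hy)
      (K.sub_starProjection_mem_orthogonal x)
  rw [← sub_add_sub_cancel x (K.starProjection x) y, norm_add_sq_real, hperp]
  ring

theorem norm_sub_starProjection_le_of_mem (x : E) {y : E} (hy : y ∈ K) :
    ‖x - K.starProjection x‖ ≤ ‖x - y‖ := by
  refine (pow_le_pow_iff_left₀ (norm_nonneg _) (norm_nonneg _) two_ne_zero).mp ?_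
  rw [K.norm_sub_sq_eq_of_mem x hy]
  exact le_add_of_nonneg_right (sq_nonneg _)

end Submodule

theorem exists_intCombination_norm_sub_sq_le {E : Type*} [NormedAddCommGroup E]
    [InnerProductSpace ℝ E] {ι : Type*} [DecidableEq ι] (w : ι → E) (s : Finset ι) {x : E}
    (hx : x ∈ Submodule.span ℝ (w '' s)) :
    ∃ c : ι → ℤ, (∀ j ∉ s, c j = 0) ∧
      ‖x - ∑ j ∈ s, (c j : ℝ) • w j‖ ^ 2 ≤ (∑ j ∈ s, ‖w j‖ ^ 2) / 4 := by
  induction s using Finset.induction_on generalizing x with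
  | empty =>
    rw [coe_empty, Set.image_empty, Submodule.span_empty, Submodule.mem_bot] at hx
    exact ⟨0, fun _ _ => rfl, by simp [hx]⟩
  | @insert a s ha ih =>
    rw [coe_insert, Set.image_insert_eq, Submodule.mem_span_insert] at hx
    obtain ⟨t, z, hz, rfl⟩ := hx
    set K := Submodule.span ℝ (w '' s)
    have : FiniteDimensional ℝ K := FiniteDimensional.span_of_finite ℝ (s.finite_toSet.image w)
    -- Round the coefficient of `w a`: the error orthogonal to `K` is at most `‖w a‖ / 2`,
    -- the error inside `K` is handled by induction.
    set p := (t - round t) • w a + z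
    have hperp : p - K.starProjection p = (t - round t) • Kᗮ.starProjection (w a) := by
      rw [map_add, map_smul, (K.starProjection_eq_self_iff).mpr hz,
        Submodule.starProjection_orthogonal_val]
      module
    obtain ⟨c, hc, hcK⟩ := ih (K.starProjection_apply_mem p)
    refine ⟨Function.update c a (round t), fun j hj => ?_, ?_⟩
    · rw [mem_insert, not_or] at hj
      rw [Function.update_of_ne hj.1, hc j hj.2]
    have hsum : t • w a + z - ∑ j ∈ insert a s, (Function.update c a (round t) j : ℝ) • w j
        = p - ∑ j ∈ s, (c j : ℝ) • w j := by
      rw [sum_insert ha, Function.update_self,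
        sum_congr rfl fun j hj => by rw [Function.update_of_ne (ne_of_mem_of_not_mem hj ha)]]
      module
    have hround : ‖p - K.starProjection p‖ ^ 2 ≤ ‖w a‖ ^ 2 / 4 := by
      have hfrac : |t - round t| ≤ 1 / 2 := abs_sub_round t
      have hproj : ‖Kᗮ.starProjection (w a)‖ ≤ ‖w a‖ := Kᗮ.norm_starProjection_apply_le _
      calc ‖p - K.starProjection p‖ ^ 2 = (|t - round t| * ‖Kᗮ.starProjection (w a)‖) ^ 2 := by
            rw [hperp, norm_smul, Real.norm_eq_abs]
        _ ≤ (1 / 2 * ‖w a‖) ^ 2 := by gcongr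
        _ = ‖w a‖ ^ 2 / 4 := by ring
    rw [hsum, K.norm_sub_sq_eq_of_mem p (K.sum_mem fun j hj =>
      K.smul_mem _ (Submodule.subset_span (Set.mem_image_of_mem w hj))), sum_insert ha]
    linarith

theorem LinearIndependent.exists_notMem_span_image_erase {𝕜 M : Type*} [DivisionRing 𝕜]
    [AddCommGroup M] [Module 𝕜 M] {ι κ : Type*} [Fintype ι] [DecidableEq ι] [Fintype κ]
    {v : κ → M} (hv : LinearIndependent 𝕜 v) (hcard : Fintype.card ι ≤ Fintype.card κ)
    (B : ι → M) (i : ι) : ∃ j, v j ∉ Submodule.span 𝕜 (B '' ↑(univ.erase i)) := by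
  classical
  by_contra! h
  have hle := linearIndependent_le_span_aux' v hv ↑((univ.erase i).image B)
    (Set.range_subset_iff.mpr (by simpa only [coe_image, SetLike.mem_coe] using h))
  have himage : ((univ.erase i).image B).card ≤ Fintype.card ι - 1 := by
    simpa [card_erase_of_mem] using card_image_le (s := univ.erase i) (f := B)
  have hpos : 0 < Fintype.card ι := Fintype.card_pos_iff.mpr ⟨i⟩
  simp only [Finset.coe_sort_coe, Fintype.card_coe] at hle
  omega

section Lattice

variable {n : ℕ} {B : Fin n → Euc n}

abbrev otherSpan (B : Fin n → Euc n) (i : Fin n) : Submodule ℝ (Euc n) :=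
  Submodule.span ℝ (B '' ↑(univ.erase i))

theorem mem_lattice_self (B : Fin n → Euc n) (i : Fin n) : B i ∈ lattice B :=
  ⟨Pi.single i 1, by simp [Pi.single_apply]⟩

theorem sum_erase_smul_mem_otherSpan (B : Fin n → Euc n) (i : Fin n) (c : Fin n → ℝ) :
    ∑ j ∈ univ.erase i, c j • B j ∈ otherSpan B i :=
  Submodule.sum_mem _ fun j hj => Submodule.smul_mem _ _ (Submodule.subset_span ⟨j, hj, rfl⟩)

theorem norm_sub_starProjection_le_of_mem_lattice {i : Fin n} {v : Euc n}
    (hv : v ∈ lattice B) (hvi : v ∉ otherSpan B i) :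
    ‖B i - (otherSpan B i).starProjection (B i)‖ ≤ ‖v‖ := by
  obtain ⟨c, rfl⟩ := hv
  set k : ℝ := (c i : ℝ)
  set s := ∑ j ∈ univ.erase i, (c j : ℝ) • B j
  have hsplit : ∑ j, (c j : ℝ) • B j = k • B i + s := (add_sum_erase _ _ (mem_univ i)).symm
  have hk : k ≠ 0 := by
    rintro hk
    exact hvi (by rw [hsplit, hk, zero_smul, zero_add]; exact sum_erase_smul_mem_otherSpan B i _)
  have hk1 : 1 ≤ |k| := by
    rw [← Int.cast_abs]
    exact_mod_cast Int.one_le_abs (Int.cast_ne_zero.mp hk)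
  have hmem : B i - k⁻¹ • ∑ j, (c j : ℝ) • B j ∈ otherSpan B i := by
    have : B i - k⁻¹ • ∑ j, (c j : ℝ) • B j = -(k⁻¹ • s) := by
      rw [hsplit, smul_add, smul_smul, inv_mul_cancel₀ hk, one_smul]
      abel
    rw [this]
    exact Submodule.neg_mem _ (Submodule.smul_mem _ _ (sum_erase_smul_mem_otherSpan B i _))
  calc ‖B i - (otherSpan B i).starProjection (B i)‖
      ≤ ‖B i - (B i - k⁻¹ • ∑ j, (c j : ℝ) • B j)‖ :=
        (otherSpan B i).norm_sub_starProjection_le_of_mem _ hmem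
    _ = |k|⁻¹ * ‖∑ j, (c j : ℝ) • B j‖ := by
      rw [sub_sub_cancel, norm_smul, norm_inv, Real.norm_eq_abs]
    _ ≤ ‖∑ j, (c j : ℝ) • B j‖ := mul_le_of_le_one_left (norm_nonneg _) (inv_le_one_of_one_le₀ hk1)

theorem norm_sub_starProjection_le_succMin (hB : LinearIndependent ℝ B) (i : Fin n) :
    ‖B i - (otherSpan B i).starProjection (B i)‖ ≤ succMin B n := by
  refine le_csInf ⟨∑ j, ‖B j‖, B, mem_lattice_self B, hB,
    fun j => single_le_sum (fun k _ => norm_nonneg (B k)) (mem_univ j)⟩ ?_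
  rintro r ⟨v, hvL, hv, hvr⟩
  obtain ⟨j, hj⟩ := hv.exists_notMem_span_image_erase le_rfl B i
  exact (norm_sub_starProjection_le_of_mem_lattice (hvL j) hj).trans (hvr j)

theorem sq_norm_le_of_srcvpReduced (hred : SRCVPReduced B) (i : Fin n) :
    ‖B i‖ ^ 2 ≤ ‖B i - (otherSpan B i).starProjection (B i)‖ ^ 2 +
      (∑ j ∈ univ.erase i, ‖B j‖ ^ 2) / 4 := by
  set V := otherSpan B i
  obtain ⟨c, hc, hbabai⟩ :=
    exists_intCombination_norm_sub_sq_le B (univ.erase i) (V.starProjection_apply_mem (B i))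
  set s := ∑ j ∈ univ.erase i, (c j : ℝ) • B j
  have hci : c i = 0 := hc i (notMem_erase i univ)
  have hs : s ∈ subLattice B i :=
    ⟨c, hci, sum_erase (f := fun j => (c j : ℝ) • B j) (a := i) _ (by simp [hci])⟩
  calc ‖B i‖ ^ 2 ≤ ‖B i - s‖ ^ 2 := pow_le_pow_left₀ (norm_nonneg _) (hred i s hs) 2
    _ = ‖B i - V.starProjection (B i)‖ ^ 2 + ‖V.starProjection (B i) - s‖ ^ 2 :=
      V.norm_sub_sq_eq_of_mem _ (sum_erase_smul_mem_otherSpan B i _)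
    _ ≤ _ := by gcongr

end Lattice

theorem srcvp_basis_length_bound_general {n : ℕ} (hn4 : n ≤ 4)
    (B : Fin n → Euc n) (hB : LinearIndependent ℝ B)
    (hred : SRCVPReduced B) :
    ∀ i : Fin n, ‖B i‖ ≤ Real.sqrt (4 * n / ((5 : ℝ) - n)) * succMin B n := by
  intro i₀
  obtain ⟨i, -, hmax⟩ := exists_max_image univ (‖B ·‖) ⟨i₀, mem_univ i₀⟩
  have hdist := norm_sub_starProjection_le_succMin hB i
  have hkey := sq_norm_le_of_srcvpReduced hred i
  have hothers : ∑ j ∈ univ.erase i, ‖B j‖ ^ 2 ≤ (n - 1) * ‖B i‖ ^ 2 := by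
    rw [sum_erase_eq_sub (mem_univ i), sub_le_iff_le_add, sub_one_mul, sub_add_cancel]
    simpa using sum_le_card_nsmul univ _ _ fun j _ =>
      pow_le_pow_left₀ (norm_nonneg _) (hmax j (mem_univ j)) 2
  have hn1 : (1 : ℝ) ≤ n := Nat.one_le_cast.mpr i.pos
  have hn5 : (0 : ℝ) < 5 - n := by
    have : (n : ℝ) ≤ 4 := by exact_mod_cast hn4
    linarith
  have hsq : ‖B i‖ ^ 2 ≤ 4 * n / (5 - n) * succMin B n ^ 2 := by
    rw [div_mul_eq_mul_div, le_div_iff₀ hn5]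
    nlinarith [pow_le_pow_left₀ (norm_nonneg _) hdist 2, sq_nonneg ‖B i‖]
  calc ‖B i₀‖ ≤ ‖B i‖ := hmax i₀ (mem_univ i₀)
    _ ≤ _ := by
      rw [← Real.sqrt_sq ((norm_nonneg _).trans hdist), ← Real.sqrt_mul (by positivity)]
      exact Real.le_sqrt_of_sq_le hsq

theorem srcvp_basis_length_bound {n : ℕ} (hn : 1 ≤ n) (hn4 : n ≤ 4)
    (B : Fin n → Euc n) (hB : LinearIndependent ℝ B)
    (hred : SRCVPReduced B) :
    ∀ i : Fin n, ‖B i‖ ≤ Real.sqrt (4 * n / ((5 : ℝ) - n)) * succMin B n :=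
  srcvp_basis_length_bound_general hn4 B hB hred
end
end

section
/- For any full-rank lattice Λ(B) in ℝ^n with successive minima λ_1(B),…,λ_n(B), the covering radius satisfies ρ(B) := sup_{x ∈ ℝ^n} dist(x, Λ(B)) ≤ (1/2)·√(Σ_{i=1}^n λ_i(B)²). -/
open Finset

noncomputable section

/-!
Choose linearly independent lattice vectors `w₁, …, wₙ` with `‖wᵢ‖ < λᵢ + ε`, each new one
outside the span of the previous ones. A point `x` is then approximated by rounding its
coordinates one vector at a time, in the manner of Babai's nearest plane algorithm: writing
`x = t • w + y` with `y` in the span `K` of the other vectors, replace `t` by `round t`. The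
part of the error orthogonal to `K` is `(t - round t)` times the component of `w` orthogonal
to `K`, of norm at most `‖w‖ / 2`, and the remaining error lies in `K`, so by Pythagoras the
squared errors add up to at most `(∑ ‖wᵢ‖²) / 4`. Letting `ε → 0` gives the bound.
-/

section NearestPlane

variable {E : Type*} [NormedAddCommGroup E] [InnerProductSpace ℝ E]

lemma norm_sub_starProjection_le (K : Submodule ℝ E) [K.HasOrthogonalProjection] (a : E) :
    ‖a - K.starProjection a‖ ≤ ‖a‖ := by
  rw [← K.starProjection_orthogonal_val]
  exact Kᗮ.norm_starProjection_apply_le a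

lemma exists_int_smul_sub_mem_add_orthogonal (K : Submodule ℝ E) [K.HasOrthogonalProjection]
    (a : E) (t : ℝ) :
    ∃ m : ℤ, ∃ q ∈ Kᗮ, t • a - (m : ℝ) • a - q ∈ K ∧ ‖q‖ ≤ ‖a‖ / 2 := by
  refine ⟨round t, (t - round t) • (a - K.starProjection a),
    Kᗮ.smul_mem _ (K.sub_starProjection_mem_orthogonal a), ?_, ?_⟩
  · have hK : t • a - (round t : ℝ) • a - (t - round t) • (a - K.starProjection a) =
        (t - round t) • K.starProjection a := by module
    rw [hK]
    exact K.smul_mem _ (K.starProjection_apply_mem a)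
  · calc ‖(t - round t) • (a - K.starProjection a)‖
          = |t - round t| * ‖a - K.starProjection a‖ := by rw [norm_smul, Real.norm_eq_abs]
      _ ≤ 1 / 2 * ‖a‖ :=
          mul_le_mul (abs_sub_round t) (norm_sub_starProjection_le K a) (norm_nonneg _)
            (by norm_num)
      _ = ‖a‖ / 2 := by ring

theorem exists_mem_span_int_norm_sub_sq_le {ι : Type*} (w : ι → E) (s : Finset ι) {x : E}
    (hx : x ∈ Submodule.span ℝ (w '' s)) :
    ∃ v ∈ Submodule.span ℤ (w '' s), ‖x - v‖ ^ 2 ≤ (∑ i ∈ s, ‖w i‖ ^ 2) / 4 := by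
  classical
  induction s using Finset.induction_on generalizing x with
  | empty =>
    simp only [coe_empty, Set.image_empty, Submodule.span_empty, Submodule.mem_bot] at hx
    exact ⟨0, zero_mem _, by simp [hx]⟩
  | insert i s hi ih =>
    rw [coe_insert, Set.image_insert_eq] at hx ⊢
    obtain ⟨t, y, hy, rfl⟩ := Submodule.mem_span_insert.1 hx
    set K := Submodule.span ℝ (w '' s)
    have : FiniteDimensional ℝ K := FiniteDimensional.span_of_finite ℝ (s.finite_toSet.image w)
    obtain ⟨m, q, hqK, hz, hq⟩ := exists_int_smul_sub_mem_add_orthogonal K (w i) t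
    obtain ⟨v, hv, hxv⟩ := ih (K.add_mem hz hy)
    have hvK : v ∈ K := Submodule.span_le_restrictScalars ℤ ℝ _ hv
    have herror : t • w i + y - (m • w i + v) = (t • w i - (m : ℝ) • w i - q + y - v) + q := by
      rw [Int.cast_smul_eq_zsmul]; abel
    refine ⟨m • w i + v, Submodule.mem_span_insert.2 ⟨m, v, hv, rfl⟩, ?_⟩
    calc ‖t • w i + y - (m • w i + v)‖ ^ 2
        = ‖t • w i - (m : ℝ) • w i - q + y - v‖ ^ 2 + ‖q‖ ^ 2 := by
          rw [herror, norm_add_sq_real,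
            K.inner_right_of_mem_orthogonal (K.sub_mem (K.add_mem hz hy) hvK) hqK, mul_zero,
            add_zero]
      _ ≤ (∑ j ∈ s, ‖w j‖ ^ 2) / 4 + (‖w i‖ / 2) ^ 2 := by gcongr
      _ = (∑ j ∈ insert i s, ‖w j‖ ^ 2) / 4 := by rw [sum_insert hi]; ring

end NearestPlane

lemma LinearIndependent.exists_notMem_span_of_card_lt {K V ι κ : Type*} [DivisionRing K]
    [AddCommGroup V] [Module K V] [Fintype ι] [Fintype κ] {u : ι → V}
    (hu : LinearIndependent K u) (w : κ → V) (hcard : Fintype.card κ < Fintype.card ι) :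
    ∃ j, u j ∉ Submodule.span K (Set.range w) := by
  have := FiniteDimensional.span_of_finite K (Set.finite_range w)
  by_contra! hsub
  have hle := Submodule.finrank_mono (Submodule.span_le.2 (Set.range_subset_iff.2 hsub))
  rw [finrank_span_eq_card hu] at hle
  exact hcard.not_ge (hle.trans (finrank_range_le_card w))

section Lattice

variable {n : ℕ} {B : Fin n → Euc n}

lemma lattice_eq_span (B : Fin n → Euc n) :
    lattice B = Submodule.span ℤ (Set.range B) := by
  ext v
  simp only [lattice, Set.mem_ofPred_eq, SetLike.mem_coe,
    Submodule.mem_span_range_iff_exists_fun, Int.cast_smul_eq_zsmul, eq_comm]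

lemma infDist_lattice_le {w : Fin n → Euc n} (hwB : ∀ i, w i ∈ lattice B)
    (hw : LinearIndependent ℝ w) (x : Euc n) :
    Metric.infDist x (lattice B) ≤ 1 / 2 * √(∑ i, ‖w i‖ ^ 2) := by
  have hx : x ∈ Submodule.span ℝ (w '' (univ : Finset (Fin n))) := by
    rw [coe_univ, Set.image_univ, hw.span_eq_top_of_card_eq_finrank' (by simp)]
    trivial
  obtain ⟨v, hv, hxv⟩ := exists_mem_span_int_norm_sub_sq_le w univ hx
  rw [coe_univ, Set.image_univ] at hv
  have hvB : v ∈ lattice B := by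
    rw [lattice_eq_span] at hwB ⊢
    exact Submodule.span_le.2 (Set.range_subset_iff.2 hwB) hv
  calc Metric.infDist x (lattice B) ≤ √(‖x - v‖ ^ 2) := by
        rw [Real.sqrt_sq (norm_nonneg _), ← dist_eq_norm]
        exact Metric.infDist_le_dist_of_mem hvB
    _ ≤ √((∑ i, ‖w i‖ ^ 2) / 4) := Real.sqrt_le_sqrt hxv
    _ = 1 / 2 * √(∑ i, ‖w i‖ ^ 2) := by
        rw [Real.sqrt_div' _ (by norm_num : (0 : ℝ) ≤ 4),
          show (4 : ℝ) = 2 ^ 2 by norm_num, Real.sqrt_sq (by norm_num)]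
        ring

lemma exists_lattice_family_norm_lt_of_succMin_lt (hB : LinearIndependent ℝ B) {k : ℕ}
    (hk0 : 0 < k) (hkn : k ≤ n) {r : ℝ} (hr : succMin B k < r) :
    ∃ u : Fin k → Euc n, (∀ j, u j ∈ lattice B) ∧ LinearIndependent ℝ u ∧ ∀ j, ‖u j‖ < r := by
  rw [succMin, csInf_lt_iff] at hr
  · obtain ⟨s, ⟨u, huB, hu, hus⟩, hsr⟩ := hr
    exact ⟨u, huB, hu, fun j => (hus j).trans_lt hsr⟩
  · exact ⟨0, fun r ⟨v, _, _, hv⟩ => (norm_nonneg _).trans (hv ⟨0, hk0⟩)⟩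
  · refine ⟨∑ i, ‖B i‖, fun j => B (Fin.castLE hkn j), fun j => ?_,
      hB.comp _ (Fin.castLE_injective hkn), fun j => ?_⟩
    · rw [lattice_eq_span]
      exact Submodule.subset_span ⟨_, rfl⟩
    · exact single_le_sum (f := fun i => ‖B i‖) (fun i _ => norm_nonneg _) (mem_univ _)

lemma exists_lattice_family_norm_lt_succMin_add (hB : LinearIndependent ℝ B) {ε : ℝ}
    (hε : 0 < ε) : ∀ k ≤ n, ∃ w : Fin k → Euc n, (∀ j, w j ∈ lattice B) ∧
      LinearIndependent ℝ w ∧ ∀ j : Fin k, ‖w j‖ < succMin B (j + 1) + ε := by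
  intro k
  induction k with
  | zero =>
    exact fun _ => ⟨Fin.elim0, fun j => j.elim0, linearIndependent_empty_type, fun j => j.elim0⟩
  | succ k ih =>
    intro hk
    obtain ⟨w, hwB, hw, hwlt⟩ := ih (Nat.le_of_succ_le hk)
    obtain ⟨u, huB, hu, hult⟩ :=
      exists_lattice_family_norm_lt_of_succMin_lt hB k.succ_pos hk (lt_add_of_pos_right _ hε)
    obtain ⟨j, hj⟩ := hu.exists_notMem_span_of_card_lt w (by simp)
    refine ⟨Fin.snoc w (u j), ?_, linearIndependent_finSnoc.2 ⟨hw, hj⟩, ?_⟩ <;>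
      simp [Fin.forall_fin_succ', hwB, huB j, hwlt, hult j]

end Lattice

theorem covering_radius_le_half_sqrt_sum_succMin_sq {n : ℕ}
    (B : Fin n → Euc n) (hB : LinearIndependent ℝ B) :
    ⨆ x : Euc n, Metric.infDist x (lattice B) ≤
      1 / 2 * Real.sqrt (∑ i : Fin n, succMin B ((i : ℕ) + 1) ^ 2) := by
  refine ciSup_le fun x => ?_
  set f : ℝ → ℝ := fun ε => 1 / 2 * √(∑ i : Fin n, (succMin B ((i : ℕ) + 1) + ε) ^ 2)
  have hf : ContinuousAt f 0 := by fun_prop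
  have hbound : ∀ ε > 0, Metric.infDist x (lattice B) ≤ f ε := by
    intro ε hε
    obtain ⟨w, hwB, hw, hwlt⟩ := exists_lattice_family_norm_lt_succMin_add hB hε n le_rfl
    refine (infDist_lattice_le hwB hw x).trans ?_
    dsimp only [f]
    gcongr with i
    exact (hwlt i).le
  simpa [f] using
    ge_of_tendsto (hf.tendsto.mono_left nhdsWithin_le_nhds)
      (eventually_nhdsWithin_of_forall (s := Set.Ioi 0) hbound)
end
end

section
/- Let B = [b_1,…,b_n] be an SR-CVP reduced basis of a full-rank lattice Λ(B) in ℝ^n with n ≥ 2. For each i let θ_i ∈ [0, π/2] be the angle between b_i and the subspace span(B_{[n]∖i}) (so ‖b_i‖² cos²θ_i = ‖b_i‖² − ‖π^⊥_{B_{[n]∖i}}(b_i)‖²), and let θ_max = max_i θ_i. Then cos²θ_max ≤ (n−1)/4. -/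
/-!
Let `b_i` be a longest basis vector and `p` its orthogonal projection onto the span `W` of the
others, so that `‖p‖ = ‖b_i‖ cos θ_i`. Babai's rounding of `p` gives a vector `s` of the
sublattice with `‖p - s‖² ≤ ¼ ∑_{j ≠ i} ‖b_j‖² ≤ (n - 1)/4 ‖b_i‖²`. Since `b_i - s` splits into
`p - s ∈ W` and `π^⊥_W(b_i) = b_i - p`, reducedness `‖b_i‖ ≤ ‖b_i - s‖` reads `‖p‖ ≤ ‖p - s‖`.
Finally `θ_max ≥ θ_i` and cosine decreases on `[0, π/2]`.
-/

open Finset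

noncomputable section

section BabaiRounding

variable {E : Type*} [NormedAddCommGroup E] [InnerProductSpace ℝ E]

theorem Submodule.norm_add_sq_of_mem_orthogonal {K : Submodule ℝ E} {x y : E}
    (hx : x ∈ Kᗮ) (hy : y ∈ K) : ‖x + y‖ ^ 2 = ‖x‖ ^ 2 + ‖y‖ ^ 2 := by
  simp only [sq]
  exact norm_add_sq_eq_norm_sq_add_norm_sq_real (K.inner_left_of_mem_orthogonal hy hx)

/-- Babai's nearest plane algorithm: rounding the coefficient of each `v a` in turn, after
projecting it orthogonally to the span of the remaining vectors, costs at most `‖v a‖ / 2`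
in a direction orthogonal to everything rounded later. -/
theorem exists_int_combination_norm_sub_sq_le {ι : Type*} [DecidableEq ι] (v : ι → E)
    (s : Finset ι) {t : E} (ht : t ∈ Submodule.span ℝ (v '' s)) :
    ∃ c : ι → ℤ, (∀ j ∉ s, c j = 0) ∧
      ‖t - ∑ j ∈ s, (c j : ℝ) • v j‖ ^ 2 ≤ 1 / 4 * ∑ j ∈ s, ‖v j‖ ^ 2 := by
  induction s using Finset.induction_on generalizing t with
  | empty =>
    rw [Finset.coe_empty, Set.image_empty, Submodule.span_empty, Submodule.mem_bot] at ht
    exact ⟨0, fun _ _ => rfl, by simp [ht]⟩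
  | insert a s ha ih =>
    set W := Submodule.span ℝ (v '' s)
    have : FiniteDimensional ℝ W := FiniteDimensional.span_of_finite ℝ (s.finite_toSet.image v)
    rw [Finset.coe_insert, Set.image_insert_eq, Submodule.span_insert] at ht
    obtain ⟨_, hy, z, hz, rfl⟩ := Submodule.mem_sup.mp ht
    obtain ⟨α, rfl⟩ := Submodule.mem_span_singleton.mp hy
    set P := W.starProjection (v a)
    set r := α - round α
    have hu : r • P + z ∈ W := W.add_mem (W.smul_mem _ (W.starProjection_apply_mem _)) hz
    obtain ⟨c, hc, hbound⟩ := ih hu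
    have hr : r ^ 2 ≤ 1 / 4 := by
      have := abs_sub_round α
      rw [← sq_abs]
      nlinarith [abs_nonneg r]
    have hw : ‖v a - P‖ ^ 2 ≤ ‖v a‖ ^ 2 := by
      rw [← Submodule.starProjection_orthogonal_val]
      exact pow_le_pow_left₀ (norm_nonneg _) (Wᗮ.norm_starProjection_apply_le _) 2
    have hsplit : α • v a + z - ∑ j ∈ insert a s, (Function.update c a (round α) j : ℝ) • v j =
        r • (v a - P) + (r • P + z - ∑ j ∈ s, (c j : ℝ) • v j) := by
      rw [Finset.sum_insert ha, Function.update_self]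
      have hrest : ∑ j ∈ s, (Function.update c a (round α) j : ℝ) • v j =
          ∑ j ∈ s, (c j : ℝ) • v j :=
        Finset.sum_congr rfl fun j hj => by rw [Function.update_of_ne (ne_of_mem_of_not_mem hj ha)]
      rw [hrest]
      module
    refine ⟨Function.update c a (round α), fun j hj => ?_, ?_⟩
    · rw [Finset.mem_insert, not_or] at hj
      rw [Function.update_of_ne hj.1, hc j hj.2]
    · have hperp : r • (v a - P) ∈ Wᗮ := Wᗮ.smul_mem _ (W.sub_starProjection_mem_orthogonal _)
      have hlat : ∑ j ∈ s, (c j : ℝ) • v j ∈ W :=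
        W.sum_mem fun j hj => W.smul_mem _ (Submodule.subset_span ⟨j, hj, rfl⟩)
      rw [hsplit, Submodule.norm_add_sq_of_mem_orthogonal hperp (W.sub_mem hu hlat),
        norm_smul, mul_pow, Real.norm_eq_abs, sq_abs, Finset.sum_insert ha]
      nlinarith [sq_nonneg ‖v a - P‖]

end BabaiRounding

theorem exists_mem_subLattice_norm_sub_sq_le {n : ℕ} (B : Fin n → Euc n) (i : Fin n) {t : Euc n}
    (ht : t ∈ Submodule.span ℝ (B '' {j | j ≠ i})) :
    ∃ s ∈ subLattice B i, ‖t - s‖ ^ 2 ≤ 1 / 4 * ∑ j ∈ univ.erase i, ‖B j‖ ^ 2 := by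
  have hcoe : ((univ.erase i : Finset (Fin n)) : Set (Fin n)) = {j | j ≠ i} := by ext; simp
  obtain ⟨c, hc, hbound⟩ := exists_int_combination_norm_sub_sq_le B (univ.erase i) (hcoe ▸ ht)
  have hci : c i = 0 := hc i (notMem_erase i univ)
  refine ⟨_, ⟨c, hci, ?_⟩, hbound⟩
  exact sum_erase (f := fun j => (c j : ℝ) • B j) univ (by rw [hci, Int.cast_zero, zero_smul])

theorem subLattice_subset_span {n : ℕ} (B : Fin n → Euc n) (i : Fin n) :
    subLattice B i ⊆ Submodule.span ℝ (B '' {j | j ≠ i}) := by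
  rintro _ ⟨c, hci, rfl⟩
  refine Submodule.sum_mem _ fun j _ => ?_
  by_cases hj : j = i
  · rw [hj, hci, Int.cast_zero, zero_smul]
    exact Submodule.zero_mem _
  · exact Submodule.smul_mem _ _ (Submodule.subset_span ⟨j, hj, rfl⟩)

theorem SRCVPReduced.norm_sq_sub_norm_starProjection_orthogonal_sq_le {n : ℕ}
    {B : Fin n → Euc n} (hred : SRCVPReduced B) (i : Fin n) :
    ‖B i‖ ^ 2 - ‖(Submodule.span ℝ (B '' {j | j ≠ i}))ᗮ.starProjection (B i)‖ ^ 2 ≤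
      1 / 4 * ∑ j ∈ univ.erase i, ‖B j‖ ^ 2 := by
  set W := Submodule.span ℝ (B '' {j | j ≠ i})
  obtain ⟨s, hs, hbound⟩ :=
    exists_mem_subLattice_norm_sub_sq_le B i (W.starProjection_apply_mem (B i))
  have hdecomp : B i - s = Wᗮ.starProjection (B i) + (W.starProjection (B i) - s) := by
    rw [Submodule.starProjection_orthogonal_val]; abel
  have hpyth := Submodule.norm_add_sq_of_mem_orthogonal (Wᗮ.starProjection_apply_mem (B i))
    (W.sub_mem (W.starProjection_apply_mem (B i)) (subLattice_subset_span B i hs))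
  rw [← hdecomp] at hpyth
  have hmin := pow_le_pow_left₀ (norm_nonneg _) (hred i s hs) 2
  linarith

theorem Real.cos_sq_le_cos_sq_of_le {x y : ℝ} (hx : 0 ≤ x) (hxy : x ≤ y) (hy : y ≤ Real.pi / 2) :
    Real.cos y ^ 2 ≤ Real.cos x ^ 2 :=
  pow_le_pow_left₀ (Real.cos_nonneg_of_mem_Icc ⟨by linarith [Real.pi_pos], hy⟩)
    (Real.cos_le_cos_of_nonneg_of_le_pi hx (by linarith [Real.pi_pos]) hxy) 2

theorem srcvp_angle_bound_general {n : ℕ}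
    (B : Fin n → Euc n) (hB : LinearIndependent ℝ B)
    (hred : SRCVPReduced B)
    (θ : Fin n → ℝ) (hθ : ∀ i, θ i ∈ Set.Icc 0 (Real.pi / 2))
    (hcosθ : ∀ i, ‖B i‖ ^ 2 * Real.cos (θ i) ^ 2 =
      ‖B i‖ ^ 2 -
        ‖(Submodule.orthogonalProjection (Submodule.span ℝ (B '' {j | j ≠ i}))ᗮ (B i) : Euc n)‖ ^ 2)
    (θmax : ℝ) (hθmax : IsGreatest (Set.range θ) θmax) :
    Real.cos θmax ^ 2 ≤ ((n : ℝ) - 1) / 4 := by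
  obtain ⟨i₀, hi₀⟩ := hθmax.1
  have : Nonempty (Fin n) := ⟨i₀⟩
  obtain ⟨i, hi⟩ := Finite.exists_max fun j => ‖B j‖
  have hsum : ∑ j ∈ univ.erase i, ‖B j‖ ^ 2 ≤ ((n : ℝ) - 1) * ‖B i‖ ^ 2 := by
    have := sum_le_card_nsmul (univ.erase i) (fun j => ‖B j‖ ^ 2) (‖B i‖ ^ 2)
      fun j _ => pow_le_pow_left₀ (norm_nonneg _) (hi j) 2
    rwa [nsmul_eq_mul, cast_card_erase_of_mem (mem_univ i), card_univ, Fintype.card_fin] at this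
  have hBi : 0 < ‖B i‖ ^ 2 := pow_pos (norm_pos_iff.mpr (hB.ne_zero i)) 2
  have hcos : Real.cos (θ i) ^ 2 ≤ ((n : ℝ) - 1) / 4 := by
    have := hred.norm_sq_sub_norm_starProjection_orthogonal_sq_le i
    rw [← Submodule.coe_orthogonalProjectionOnto_apply] at this
    refine le_of_mul_le_mul_left ?_ hBi
    linarith [hcosθ i]
  calc Real.cos θmax ^ 2 ≤ Real.cos (θ i) ^ 2 :=
        Real.cos_sq_le_cos_sq_of_le (hθ i).1 (hθmax.2 ⟨i, rfl⟩) (hi₀ ▸ (hθ i₀).2)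
    _ ≤ ((n : ℝ) - 1) / 4 := hcos

theorem srcvp_angle_bound {n : ℕ} (hn : 2 ≤ n)
    (B : Fin n → Euc n) (hB : LinearIndependent ℝ B)
    (hred : SRCVPReduced B)
    (θ : Fin n → ℝ) (hθ : ∀ i, θ i ∈ Set.Icc 0 (Real.pi / 2))
    (hcosθ : ∀ i, ‖B i‖ ^ 2 * Real.cos (θ i) ^ 2 =
      ‖B i‖ ^ 2 -
        ‖(Submodule.orthogonalProjection (Submodule.span ℝ (B '' {j | j ≠ i}))ᗮ (B i) : Euc n)‖ ^ 2)
    (θmax : ℝ) (hθmax : IsGreatest (Set.range θ) θmax) :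
    Real.cos θmax ^ 2 ≤ ((n : ℝ) - 1) / 4 :=
  srcvp_angle_bound_general B hB hred θ hθ hcosθ θmax hθmax
end
end

section
/- Let b_1,…,b_n be independent random vectors in ℝ^n whose entries are i.i.d. standard normal N(0,1), and let a_2,…,a_n be fixed integers, not all zero, with S = Σ_{i=2}^n a_i². Then Pr( ‖b_1 + Σ_{i=2}^n a_i b_i‖² ≤ ‖b_1‖² ) ≤ (1 + S/4)^{−n/2}. -/
/-!
Chernoff's bound: with `v = ∑ aᵢ bᵢ`, the probability is at most
`E exp((‖b₁‖² - ‖b₁ + v‖²) / 4)`. The exponent is a sum over the `n` coordinates, and the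
columns `(b i j)ᵢ` of the Gaussian matrix are independent, so this expectation is the `n`-th
power of `E exp((X² - (X + Y)²) / 4)` for independent `X ~ N(0,1)` and `Y ~ N(0,S)`.
Integrating out `X` through the Gaussian moment generating function leaves
`E exp(-Y² / 8) = (1 + S/4)^(-1/2)`. The parameter `1/4` maximises `t (1 - 2t)` in
`E exp(t (X² - (X + Y)²)) = (1 + 2t (1 - 2t) S)^(-1/2)`.
-/

open Finset MeasureTheory ProbabilityTheory

noncomputable section

/-- The law of `n` independent random vectors in `ℝ^n` whose entries are
i.i.d. standard normal `N(0,1)`. -/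
def gaussBasisLaw (n : ℕ) : Measure (Fin n → Fin n → ℝ) :=
  Measure.pi fun _ : Fin n => Measure.pi fun _ : Fin n => gaussianReal 0 1

open Real
open scoped ENNReal NNReal

namespace MeasureTheory

theorem measurePreserving_swap_pi {ι κ X : Type*} [Fintype ι] [Fintype κ] [MeasurableSpace X]
    (μ : ι → κ → Measure X) [∀ i j, IsProbabilityMeasure (μ i j)] :
    MeasurePreserving (Function.swap : (ι → κ → X) → κ → ι → X)
      (Measure.pi fun i => Measure.pi fun j => μ i j)
      (Measure.pi fun j => Measure.pi fun i => μ i j) := by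
  have hswap : (Function.swap : (ι → κ → X) → κ → ι → X) =
      MeasurableEquiv.curry κ ι X ∘
        MeasurableEquiv.piCongrLeft (fun _ => X) (Equiv.prodComm ι κ) ∘
          (MeasurableEquiv.curry ι κ X).symm := by
    ext b j i
    simp [MeasurableEquiv.piCongrLeft, Equiv.piCongrLeft, MeasurableEquiv.coe_curry]
  refine ⟨by fun_prop, ?_⟩
  simp_rw [← Measure.infinitePi_eq_pi]
  rw [hswap, ← Measure.map_map (by fun_prop) (by fun_prop),
    ← Measure.map_map (by fun_prop) (by fun_prop), Measure.infinitePi_map_curry_symm]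
  have hcomm :=
    Measure.infinitePi_map_piCongrLeft (fun q : κ × ι => μ q.2 q.1) (Equiv.prodComm ι κ)
  simp only [Equiv.prodComm_apply, Prod.fst_swap, Prod.snd_swap] at hcomm
  rw [hcomm]
  exact Measure.infinitePi_map_curry fun j i => μ i j

theorem lintegral_fintype_prod_eq_prod {ι : Type*} [Fintype ι] {X : ι → Type*}
    [∀ i, MeasurableSpace (X i)] (μ : ∀ i, Measure (X i)) [∀ i, IsProbabilityMeasure (μ i)]
    {f : ∀ i, X i → ℝ≥0∞} (hf : ∀ i, Measurable (f i)) :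
    ∫⁻ x, ∏ i, f i (x i) ∂Measure.pi μ = ∏ i, ∫⁻ y, f i y ∂μ i := by
  rw [lintegral_prod_eq_prod_lintegral_of_indepFun _ _
    (iIndepFun_pi fun i => (hf i).aemeasurable) fun i => (hf i).comp (measurable_pi_apply i)]
  exact Finset.prod_congr rfl fun i _ => (measurePreserving_eval μ i).lintegral_comp (hf i)

end MeasureTheory

namespace ProbabilityTheory

theorem lintegral_exp_mul_gaussianReal (μ : ℝ) (v : ℝ≥0) (t : ℝ) :
    ∫⁻ x, ENNReal.ofReal (exp (t * x)) ∂gaussianReal μ v =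
      ENNReal.ofReal (exp (μ * t + v * t ^ 2 / 2)) := by
  rw [← ofReal_integral_eq_lintegral_ofReal (integrable_exp_mul_gaussianReal t)
    (Filter.Eventually.of_forall fun x => (exp_pos _).le), ← congrFun mgf_id_gaussianReal t]
  rfl

theorem lintegral_exp_neg_mul_sq_gaussianReal {c : ℝ} (hc : 0 ≤ c) (v : ℝ≥0) :
    ∫⁻ x, ENNReal.ofReal (exp (-c * x ^ 2)) ∂gaussianReal 0 v =
      ENNReal.ofReal (√(1 + 2 * c * v))⁻¹ := by
  have hv : gaussianReal 0 v = (gaussianReal 0 1).map (√v * ·) := by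
    rw [gaussianReal_map_const_mul]
    congr 1
    · simp
    · ext; simp
  rw [hv, lintegral_map (by fun_prop) (by fun_prop),
    gaussianReal_of_var_ne_zero 0 one_ne_zero,
    lintegral_withDensity_eq_lintegral_mul _ (measurable_gaussianPDF 0 1) (by fun_prop)]
  have hb : 0 < 1 / 2 + c * v := by positivity
  have hdensity : ∀ x, (gaussianPDF 0 1 * fun x => ENNReal.ofReal (exp (-c * (√v * x) ^ 2))) x =
      ENNReal.ofReal ((√(2 * π))⁻¹ * exp (-(1 / 2 + c * v) * x ^ 2)) := by
    intro x
    rw [Pi.mul_apply, gaussianPDF, ← ENNReal.ofReal_mul (gaussianPDFReal_nonneg 0 1 x),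
      gaussianPDFReal, mul_assoc, ← exp_add, mul_pow, Real.sq_sqrt v.coe_nonneg]
    simp only [NNReal.coe_one, mul_one, sub_zero]
    congr 3
    ring
  simp_rw [hdensity]
  rw [← ofReal_integral_eq_lintegral_ofReal ((integrable_exp_neg_mul_sq hb).const_mul _)
      (Filter.Eventually.of_forall fun x => by positivity), integral_const_mul, integral_gaussian]
  congr 1
  rw [← sqrt_inv, ← sqrt_inv, ← sqrt_mul (by positivity)]
  congr 1
  field_simp

theorem map_pi_gaussianReal_sum_mul {ι : Type*} [Fintype ι] (s : Finset ι) (c : ι → ℝ) :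
    (Measure.pi fun _ : ι => gaussianReal 0 1).map (fun x => ∑ i ∈ s, c i * x i) =
      gaussianReal 0 (∑ i ∈ s, c i ^ 2).toNNReal := by
  classical
  have hindep :
      iIndepFun (fun i (x : ι → ℝ) => c i * x i) (Measure.pi fun _ : ι => gaussianReal 0 1) :=
    iIndepFun_pi fun i => (measurable_const_mul (c i)).aemeasurable
  induction s using Finset.induction_on with
  | empty => simp [gaussianReal_zero_var]
  | insert k s hk ih =>
    have hk_law : (Measure.pi fun _ : ι => gaussianReal 0 1).map (fun x => c k * x k) =
        gaussianReal 0 (c k ^ 2).toNNReal := by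
      change Measure.map ((c k * ·) ∘ fun x : ι → ℝ => x k) _ = _
      rw [← Measure.map_map (measurable_const_mul (c k)) (measurable_pi_apply k),
        (measurePreserving_eval _ k).map_eq, gaussianReal_map_const_mul]
      congr 1
      · simp
      · ext; simp [sq_nonneg]
    have hsum : (fun x : ι → ℝ => ∑ i ∈ insert k s, c i * x i) =
        (fun x => c k * x k) + ∑ i ∈ s, fun x => c i * x i := by
      ext x; simp [Finset.sum_insert hk]
    rw [hsum, gaussianReal_add_gaussianReal_of_indepFun
      (hindep.indepFun_finsetSum_of_notMem (fun i => by fun_prop) hk).symm hk_law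
      (by rwa [Finset.sum_fn])]
    congr 1
    · simp
    · rw [Finset.sum_insert hk,
        Real.toNNReal_add (sq_nonneg _) (Finset.sum_nonneg fun i _ => sq_nonneg _)]

theorem map_pi_gaussianReal_prodMk_sum_mul {ι : Type*} [Fintype ι] {i₀ : ι} {s : Finset ι}
    (hi₀ : i₀ ∉ s) (c : ι → ℝ) :
    (Measure.pi fun _ : ι => gaussianReal 0 1).map (fun x => (x i₀, ∑ i ∈ s, c i * x i)) =
      (gaussianReal 0 1).prod (gaussianReal 0 (∑ i ∈ s, c i ^ 2).toNNReal) := by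
  have hcoord :
      iIndepFun (fun i (x : ι → ℝ) => x i) (Measure.pi fun _ : ι => gaussianReal 0 1) :=
    iIndepFun_pi (X := fun _ => id) fun _ => aemeasurable_id
  have hindep : IndepFun (fun x : ι → ℝ => x i₀) (fun x => ∑ i ∈ s, c i * x i)
      (Measure.pi fun _ : ι => gaussianReal 0 1) := by
    have := (hcoord.indepFun_finset {i₀} s (Finset.disjoint_singleton_left.2 hi₀)
      measurable_pi_apply).comp (φ := fun y => y ⟨i₀, Finset.mem_singleton_self i₀⟩)
      (ψ := fun y => ∑ i : s, c i * y i) (_mγ := Real.measurableSpace)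
      (_mγ' := Real.measurableSpace) (measurable_pi_apply _) (by fun_prop)
    simpa only [Function.comp_def, Finset.sum_coe_sort s fun i => c i * _] using this
  rw [hindep.map_prod_eq_prod_map_map (measurable_pi_apply i₀).aemeasurable
      (Measurable.aemeasurable (by fun_prop)),
    (measurePreserving_eval _ i₀).map_eq, map_pi_gaussianReal_sum_mul]

theorem lintegral_exp_sq_sub_sq_add_gaussianReal_prod (v : ℝ≥0) :
    ∫⁻ p, ENNReal.ofReal (exp ((p.1 ^ 2 - (p.1 + p.2) ^ 2) / 4))
        ∂(gaussianReal 0 1).prod (gaussianReal 0 v) =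
      ENNReal.ofReal (√(1 + v / 4))⁻¹ := by
  have hinner : ∀ y : ℝ,
      ∫⁻ x, ENNReal.ofReal (exp ((x ^ 2 - (x + y) ^ 2) / 4)) ∂gaussianReal 0 1 =
      ENNReal.ofReal (exp (-(1 / 8) * y ^ 2)) := by
    intro y
    have hsplit : ∀ x : ℝ, ENNReal.ofReal (exp ((x ^ 2 - (x + y) ^ 2) / 4)) =
        ENNReal.ofReal (exp (-y ^ 2 / 4)) * ENNReal.ofReal (exp (-y / 2 * x)) := by
      intro x
      rw [← ENNReal.ofReal_mul (exp_pos _).le, ← exp_add]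
      ring_nf
    simp_rw [hsplit]
    rw [lintegral_const_mul _ (by fun_prop), lintegral_exp_mul_gaussianReal,
      ← ENNReal.ofReal_mul (exp_pos _).le, ← exp_add]
    push_cast
    ring_nf
  rw [lintegral_prod_symm _ (Measurable.aemeasurable (by fun_prop))]
  simp_rw [hinner]
  rw [lintegral_exp_neg_mul_sq_gaussianReal (by norm_num)]
  ring_nf

theorem lintegral_pi_gaussianReal_exp_sq_sub_sq_add_sum {ι : Type*} [Fintype ι] {i₀ : ι}
    {s : Finset ι} (hi₀ : i₀ ∉ s) (c : ι → ℝ) :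
    ∫⁻ x, ENNReal.ofReal (exp ((x i₀ ^ 2 - (x i₀ + ∑ i ∈ s, c i * x i) ^ 2) / 4))
        ∂(Measure.pi fun _ : ι => gaussianReal 0 1) =
      ENNReal.ofReal (√(1 + (∑ i ∈ s, c i ^ 2) / 4))⁻¹ := by
  have h := lintegral_map (μ := Measure.pi fun _ : ι => gaussianReal 0 1)
    (f := fun p : ℝ × ℝ => ENNReal.ofReal (exp ((p.1 ^ 2 - (p.1 + p.2) ^ 2) / 4)))
    (g := fun x => (x i₀, ∑ i ∈ s, c i * x i)) (by fun_prop) (by fun_prop)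
  rwa [map_pi_gaussianReal_prodMk_sum_mul hi₀, lintegral_exp_sq_sub_sq_add_gaussianReal_prod,
    Real.coe_toNNReal _ (Finset.sum_nonneg fun i _ => sq_nonneg (c i)), eq_comm] at h

theorem lintegral_pi_pi_gaussianReal_exp_sum_sq_sub_sq_add_sum {ι κ : Type*} [Fintype ι]
    [Fintype κ] {i₀ : ι} {s : Finset ι} (hi₀ : i₀ ∉ s) (c : ι → ℝ) :
    ∫⁻ b, ENNReal.ofReal
          (exp ((∑ j, b i₀ j ^ 2 - ∑ j, (b i₀ j + ∑ i ∈ s, c i * b i j) ^ 2) / 4))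
        ∂(Measure.pi fun _ : ι => Measure.pi fun _ : κ => gaussianReal 0 1) =
      ENNReal.ofReal (√(1 + (∑ i ∈ s, c i ^ 2) / 4))⁻¹ ^ Fintype.card κ := by
  set G : (ι → ℝ) → ℝ≥0∞ := fun x =>
    ENNReal.ofReal (exp ((x i₀ ^ 2 - (x i₀ + ∑ i ∈ s, c i * x i) ^ 2) / 4))
  have hcolumns : ∀ b : ι → κ → ℝ,
      ENNReal.ofReal
          (exp ((∑ j, b i₀ j ^ 2 - ∑ j, (b i₀ j + ∑ i ∈ s, c i * b i j) ^ 2) / 4)) =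
        ∏ j, G (Function.swap b j) := by
    intro b
    rw [← ENNReal.ofReal_prod_of_nonneg fun j _ => (exp_pos _).le, ← exp_sum,
      ← Finset.sum_div, ← Finset.sum_sub_distrib]
  simp_rw [hcolumns]
  rw [(measurePreserving_swap_pi fun (_ : ι) (_ : κ) => gaussianReal 0 1).lintegral_comp
      (f := fun b => ∏ j, G (b j)) (by fun_prop),
    lintegral_fintype_prod_eq_prod _ fun _ => by fun_prop]
  simp_rw [G, lintegral_pi_gaussianReal_exp_sq_sub_sq_add_sum hi₀]
  rw [Finset.prod_const, Finset.card_univ]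

end ProbabilityTheory

theorem gauss_prob_shorter_combination_le_general {n : ℕ} (hn : 0 < n) (a : Fin n → ℤ)
    (S : ℝ) (hS : S = ∑ i ∈ univ.erase (⟨0, hn⟩ : Fin n), (a i : ℝ) ^ 2) :
    gaussBasisLaw n
        {b : Fin n → Fin n → ℝ |
          ‖(EuclideanSpace.equiv (Fin n) ℝ).symm (b ⟨0, hn⟩) +
              ∑ i ∈ univ.erase (⟨0, hn⟩ : Fin n),
                (a i : ℝ) • (EuclideanSpace.equiv (Fin n) ℝ).symm (b i)‖ ^ 2 ≤
            ‖(EuclideanSpace.equiv (Fin n) ℝ).symm (b ⟨0, hn⟩)‖ ^ 2} ≤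
      ENNReal.ofReal ((1 + S / 4) ^ (-(n : ℝ) / 2)) := by
  set i₀ : Fin n := ⟨0, hn⟩
  have hS0 : 0 ≤ S := hS ▸ Finset.sum_nonneg fun i _ => sq_nonneg _
  calc _ ≤ ∫⁻ b, ENNReal.ofReal (exp ((∑ j, b i₀ j ^ 2 -
          ∑ j, (b i₀ j + ∑ i ∈ univ.erase i₀, (a i : ℝ) * b i j) ^ 2) / 4))
          ∂gaussBasisLaw n := by
        refine meas_le_lintegral₀ (Measurable.aemeasurable (by fun_prop)) fun b hb => ?_
        simp only [Set.mem_ofPred_eq, EuclideanSpace.real_norm_sq_eq, PiLp.add_apply,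
          PiLp.continuousLinearEquiv_symm_apply, WithLp.ofLp_sum, WithLp.ofLp_smul,
          Finset.sum_apply, Pi.smul_apply, smul_eq_mul] at hb
        exact ENNReal.one_le_ofReal.2 (one_le_exp (div_nonneg (sub_nonneg.2 hb) zero_le_four))
    _ = ENNReal.ofReal (√(1 + S / 4))⁻¹ ^ n := by
        rw [gaussBasisLaw, lintegral_pi_pi_gaussianReal_exp_sum_sq_sub_sq_add_sum
          (Finset.notMem_erase i₀ univ), ← hS, Fintype.card_fin]
    _ = ENNReal.ofReal ((1 + S / 4) ^ (-(n : ℝ) / 2)) := by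
        rw [← ENNReal.ofReal_pow (by positivity), sqrt_eq_rpow, ← rpow_neg (by positivity),
          ← rpow_natCast, ← rpow_mul (by positivity)]
        ring_nf

theorem gauss_prob_shorter_combination_le {n : ℕ} (hn : 0 < n) (a : Fin n → ℤ)
    (ha : ∃ i : Fin n, i ≠ ⟨0, hn⟩ ∧ a i ≠ 0)
    (S : ℝ) (hS : S = ∑ i ∈ univ.erase (⟨0, hn⟩ : Fin n), (a i : ℝ) ^ 2) :
    gaussBasisLaw n
        {b : Fin n → Fin n → ℝ |
          ‖(EuclideanSpace.equiv (Fin n) ℝ).symm (b ⟨0, hn⟩) +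
              ∑ i ∈ univ.erase (⟨0, hn⟩ : Fin n),
                (a i : ℝ) • (EuclideanSpace.equiv (Fin n) ℝ).symm (b i)‖ ^ 2 ≤
            ‖(EuclideanSpace.equiv (Fin n) ℝ).symm (b ⟨0, hn⟩)‖ ^ 2} ≤
      ENNReal.ofReal ((1 + S / 4) ^ (-(n : ℝ) / 2)) :=
  gauss_prob_shorter_combination_le_general hn a S hS
end
end

section
/- Let B = [b_1,…,b_n] be an invertible real n×n matrix with columns b_i, let D = B^{−⊤} with columns d_1,…,d_n (the dual basis, satisfying ⟨d_i, b_j⟩ = δ_{ij}), and let b_i* denote the i-th Gram–Schmidt vector of B. Then for every i: (a) ‖π^⊥_{B_{[n]∖i}}(b_i)‖ = 1/‖d_i‖, and (b) ‖b_i*‖ ≥ 1/‖d_i‖. -/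
/-!
The dual vector `d_i` is orthogonal to every `b_j` with `j ≠ i`, and since the `b_j` span the
space, the orthogonal complement of the other columns is exactly the line `ℝ d_i`. Projecting
`b_i` onto that line gives `(⟪d_i, b_i⟫ / ‖d_i‖²) d_i = d_i / ‖d_i‖²`, of norm `1 / ‖d_i‖`.
The Gram–Schmidt vector `b_i*` is the projection of `b_i` onto the orthogonal complement of the
earlier columns only, a larger subspace, so its norm can only be larger.
-/

noncomputable section

instance finWFLT (n : ℕ) : WellFoundedLT (Fin n) := inferInstance

open InnerProductSpace Submodule

section
variable {𝕜 E : Type*} [RCLike 𝕜] [NormedAddCommGroup E] [InnerProductSpace 𝕜 E]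

theorem Submodule.mem_orthogonal_span_iff {s : Set E} {v : E} :
    v ∈ (span 𝕜 s)ᗮ ↔ ∀ u ∈ s, inner 𝕜 u v = 0 := by
  rw [← span_singleton_le_iff_mem, ← IsOrtho, isOrtho_comm, isOrtho_span]
  simp

theorem Submodule.norm_starProjection_le_of_le {U V : Submodule 𝕜 E}
    [U.HasOrthogonalProjection] [V.HasOrthogonalProjection] (h : U ≤ V) (x : E) :
    ‖U.starProjection x‖ ≤ ‖V.starProjection x‖ := by
  rw [← starProjection_comp_starProjection_of_le h]
  exact norm_starProjection_apply_le _ _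

theorem InnerProductSpace.gramSchmidt_eq_starProjection {ι : Type*} [LinearOrder ι]
    [LocallyFiniteOrderBot ι] [WellFoundedLT ι] (f : ι → E) (i : ι)
    [(span 𝕜 (f '' Set.Iio i))ᗮ.HasOrthogonalProjection] :
    gramSchmidt 𝕜 f i = (span 𝕜 (f '' Set.Iio i))ᗮ.starProjection (f i) := by
  refine (eq_starProjection_of_mem_orthogonal ?_ ?_).symm
  · rw [← span_gramSchmidt_Iio 𝕜 f i, mem_orthogonal_span_iff]
    rintro _ ⟨j, hj, rfl⟩
    exact gramSchmidt_orthogonal 𝕜 f (ne_of_lt hj)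
  · refine le_orthogonal_orthogonal _ ?_
    rw [← span_gramSchmidt_Iio 𝕜 f i, sub_eq_iff_eq_add'.2 (gramSchmidt_def'' 𝕜 f i)]
    exact sum_mem fun j hj => smul_mem _ _ (subset_span ⟨j, Finset.mem_Iio.1 hj, rfl⟩)

variable {ι : Type*} {b : ι → E} {i : ι} {d : E}

theorem orthogonal_span_image_ne_eq_span_singleton (hb : span 𝕜 (Set.range b) = ⊤)
    (hdi : inner 𝕜 d (b i) = 1) (hdj : ∀ j ≠ i, inner 𝕜 d (b j) = 0) :
    (span 𝕜 (b '' {j | j ≠ i}))ᗮ = 𝕜 ∙ d := by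
  refine le_antisymm (fun x hx => ?_) ?_
  · have hx' : ∀ j ≠ i, inner 𝕜 (b j) x = 0 :=
      fun j hj => mem_orthogonal_span_iff.1 hx _ ⟨j, hj, rfl⟩
    have hker : x - inner 𝕜 (b i) x • d ∈ (span 𝕜 (Set.range b))ᗮ := by
      rw [mem_orthogonal_span_iff]
      rintro _ ⟨j, rfl⟩
      rw [inner_sub_right, inner_smul_right, ← inner_conj_symm (b j) d]
      rcases eq_or_ne j i with rfl | hj
      · simp [hdi]
      · simp [hx' j hj, hdj j hj]
    rw [hb, top_orthogonal_eq_bot, mem_bot, sub_eq_zero] at hker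
    exact hker ▸ smul_mem _ _ (mem_span_singleton_self d)
  · rw [span_singleton_le_iff_mem, mem_orthogonal_span_iff]
    rintro _ ⟨j, hj, rfl⟩
    rw [← inner_conj_symm, hdj j hj, map_zero]

variable [FiniteDimensional 𝕜 E]

theorem norm_starProjection_orthogonal_span_image_ne (hb : span 𝕜 (Set.range b) = ⊤)
    (hdi : inner 𝕜 d (b i) = 1) (hdj : ∀ j ≠ i, inner 𝕜 d (b j) = 0) :
    ‖(span 𝕜 (b '' {j | j ≠ i}))ᗮ.starProjection (b i)‖ = 1 / ‖d‖ := by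
  have hd : ‖d‖ ≠ 0 := by
    rw [norm_ne_zero_iff]
    rintro rfl
    simp at hdi
  simp only [orthogonal_span_image_ne_eq_span_singleton hb hdi hdj, starProjection_singleton,
    hdi, norm_smul]
  simp
  field_simp

theorem one_div_norm_le_norm_gramSchmidt [LinearOrder ι] [LocallyFiniteOrderBot ι]
    [WellFoundedLT ι] (hb : span 𝕜 (Set.range b) = ⊤) (hdi : inner 𝕜 d (b i) = 1)
    (hdj : ∀ j ≠ i, inner 𝕜 d (b j) = 0) :
    1 / ‖d‖ ≤ ‖gramSchmidt 𝕜 b i‖ := by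
  rw [gramSchmidt_eq_starProjection, ← norm_starProjection_orthogonal_span_image_ne hb hdi hdj]
  exact norm_starProjection_le_of_le
    (orthogonal_le (span_mono (Set.image_mono fun _ hj => ne_of_lt hj))) _

end

namespace Matrix
variable {m : Type*} [Fintype m] [DecidableEq m]

theorem inner_equiv_symm_row_inv_col (B : Matrix m m ℝ) (hB : IsUnit B.det) (j k : m) :
    inner ℝ ((EuclideanSpace.equiv m ℝ).symm (B⁻¹ j)) ((EuclideanSpace.equiv m ℝ).symm (Bᵀ k)) =
      (1 : Matrix m m ℝ) j k := by
  rw [← B.nonsing_inv_mul hB, mul_apply]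
  simp [EuclideanSpace.inner_eq_star_dotProduct, dotProduct, mul_comm]

theorem span_range_equiv_symm_col_eq_top {𝕜 : Type*} [RCLike 𝕜] (B : Matrix m m 𝕜)
    (hB : IsUnit B.det) :
    span 𝕜 (Set.range fun k => (EuclideanSpace.equiv m 𝕜).symm (Bᵀ k)) = ⊤ := by
  refine LinearIndependent.span_eq_top_of_card_eq_finrank' ?_ (by simp)
  exact (B.linearIndependent_cols_of_isUnit ((isUnit_iff_isUnit_det B).2 hB)).map'
    (EuclideanSpace.equiv m 𝕜).symm.toLinearEquiv.toLinearMap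
    (EuclideanSpace.equiv m 𝕜).symm.toLinearEquiv.ker

end Matrix

theorem dual_basis_norm_eq_inv_orth_component {n : ℕ}
    (B : Matrix (Fin n) (Fin n) ℝ) (hB : IsUnit B.det)
    (col : Fin n → Euc n)
    (hcol : ∀ i, col i = (EuclideanSpace.equiv (Fin n) ℝ).symm (B.transpose i))
    (d : Fin n → Euc n)
    (hd : ∀ i, d i = (EuclideanSpace.equiv (Fin n) ℝ).symm (B⁻¹ i)) :
    ∀ i : Fin n,
      ‖(Submodule.orthogonalProjectionOnto (Submodule.span ℝ (col '' {j | j ≠ i}))ᗮ (col i) : Euc n)‖ =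
          1 / ‖d i‖ ∧
        ‖InnerProductSpace.gramSchmidt ℝ col i‖ ≥ 1 / ‖d i‖ := by
  intro i
  have hspan : span ℝ (Set.range col) = ⊤ := by
    simpa only [← funext hcol] using B.span_range_equiv_symm_col_eq_top hB
  have hdual (k : Fin n) : inner ℝ (d i) (col k) = (1 : Matrix (Fin n) (Fin n) ℝ) i k := by
    rw [hd, hcol]
    exact B.inner_equiv_symm_row_inv_col hB i k
  have hdi : inner ℝ (d i) (col i) = 1 := by simpa using hdual i
  have hdj (j : Fin n) (hj : j ≠ i) : inner ℝ (d i) (col j) = 0 := by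
    simpa [hj.symm] using hdual j
  exact ⟨norm_starProjection_orthogonal_span_image_ne hspan hdi hdj,
    one_div_norm_le_norm_gramSchmidt hspan hdi hdj⟩
end
end

section
/- Let n ≥ 2, let u, v be nonzero vectors in ℝ^n with angle θ = arccos(⟨u,v⟩/(‖u‖‖v‖)), and let a be a uniformly random vector on the unit sphere S^{n−1}. Then Pr( sign(⟨a,u⟩) ≠ sign(⟨a,v⟩) ) = θ/π. Consequently, the angular hash family F = { f_a : f_a(x) = 1 if ⟨a,x⟩ ≥ 0, else 0 } is (θ_1, θ_2, 1 − θ_1/π, 1 − θ_2/π)-sensitive for the angular distance D(u,v) = arccos(⟨u,v⟩/(‖u‖‖v‖)) for any θ_1 < θ_2. -/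
open MeasureTheory

noncomputable section

/-- The uniform probability measure on the unit sphere `S^{n-1}` of `ℝ^n`. -/
def unifSphere (n : ℕ) : Measure (Metric.sphere (0 : Euc n) 1) :=
  ((volume : Measure (Euc n)).toSphere Set.univ)⁻¹ • (volume : Measure (Euc n)).toSphere

/-- The angular hash associated with the vector `a`: `x ↦ 1` if `⟨a, x⟩ ≥ 0`, else `0`. -/
def angHash {n : ℕ} (a x : Euc n) : ℕ := if 0 ≤ (inner ℝ a x : ℝ) then 1 else 0

/-!
Normalise `u` and `v` and write them as `cos α • f 0 ∓ sin α • f 1` for an orthonormal pair `f`,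
where `α` is half their angle `θ`. The signs of `⟪a, u⟫` and `⟪a, v⟫` then depend only on the
coordinates of `a` in the plane of `f`, and they differ exactly when these coordinates lie in a
double wedge of total opening `4α = 2θ`. The uniform measure of a set of directions is the volume
of the solid cone it spans in the unit ball, divided by the volume of the ball. Splitting off the
plane of `f` and using polar coordinates in it, the volume of the solid cone over a planar cone is
a radial factor times the angular measure of the planar cone; for the whole plane this angular
measure is `2π`, so the probability is `2θ / 2π`.
-/

open Set Metric Real InnerProductGeometry
open scoped ENNReal symmDiff RealInnerProductSpace

def IsCone {E : Type*} [SMul ℝ E] (C : Set E) : Prop :=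
  ∀ r : ℝ, 0 < r → ∀ x, r • x ∈ C ↔ x ∈ C

def angularMeasure (W : Set (ℝ × ℝ)) : ℝ≥0∞ :=
  volume (Ioo (-π) π ∩ {φ | (cos φ, sin φ) ∈ W})

theorem Real.cos_nonneg_iff_abs_le_pi_div_two {x : ℝ} (hx : |x| < 3 * π / 2) :
    0 ≤ cos x ↔ |x| ≤ π / 2 := by
  rw [← cos_abs]
  refine ⟨fun h => ?_, fun h => cos_nonneg_of_neg_pi_div_two_le_of_le ?_ h⟩
  · by_contra! hlt
    exact (cos_neg_of_pi_div_two_lt_of_lt hlt (by linarith)).not_ge h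
  · linarith [abs_nonneg x, pi_pos]

theorem volume_Ioo_inter_cos_nonneg_symmDiff {α : ℝ} (h0 : 0 ≤ α) (hα : α ≤ π / 2) :
    volume (Ioo (-π) π ∩ ({φ | 0 ≤ cos (φ + α)} ∆ {φ | 0 ≤ cos (φ - α)})) =
      ENNReal.ofReal (4 * α) := by
  have hπ := pi_pos
  set X := Ico (-(π / 2) - α) (α - π / 2) ∪ Ioc (π / 2 - α) (π / 2 + α)
  have hX : Ioo (-π) π ∩ ({φ | 0 ≤ cos (φ + α)} ∆ {φ | 0 ≤ cos (φ - α)}) = Ioo (-π) π ∩ X := by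
    ext φ
    simp only [mem_inter_iff, mem_Ioo, and_congr_right_iff]
    rintro ⟨h1, h2⟩
    rw [mem_symmDiff, mem_ofPred_eq, mem_ofPred_eq,
      cos_nonneg_iff_abs_le_pi_div_two (by rw [abs_lt]; constructor <;> linarith),
      cos_nonneg_iff_abs_le_pi_div_two (by rw [abs_lt]; constructor <;> linarith), abs_le, abs_le]
    simp only [X, mem_union, mem_Ico, mem_Ioc]
    grind
  have hXsub : X ⊆ Icc (-π) π := by
    rintro φ (⟨h1, h2⟩ | ⟨h1, h2⟩) <;> constructor <;> linarith
  have hae : (Ioo (-π) π ∩ X : Set ℝ) =ᵐ[volume] (Icc (-π) π ∩ X : Set ℝ) :=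
    Ioo_ae_eq_Icc.inter (Filter.EventuallyEq.refl _ X)
  have hdisj : Disjoint (Ico (-(π / 2) - α) (α - π / 2)) (Ioc (π / 2 - α) (π / 2 + α)) := by
    rw [Set.disjoint_left]
    rintro φ ⟨-, h1⟩ ⟨h2, -⟩
    linarith
  rw [hX, measure_congr hae, inter_eq_right.mpr hXsub, measure_union hdisj measurableSet_Ioc,
    volume_Ico, volume_Ioc, ← ENNReal.ofReal_add (by linarith) (by linarith)]
  ring_nf

theorem setLIntegral_cone_radial_eq_mul {W : Set (ℝ × ℝ)} (hW : MeasurableSet W) (hcone : IsCone W)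
    {g : ℝ → ℝ≥0∞} (hg : Measurable g) :
    ∫⁻ w in W, g (w.1 ^ 2 + w.2 ^ 2) =
      (∫⁻ r in Ioi 0, ENNReal.ofReal r * g (r ^ 2)) * angularMeasure W := by
  set A := {φ | (cos φ, sin φ) ∈ W}
  have hA : MeasurableSet A := (continuous_cos.prodMk continuous_sin).measurable hW
  have hpolar : ∀ p ∈ polarCoord.target,
      ENNReal.ofReal p.1 • W.indicator (fun w => g (w.1 ^ 2 + w.2 ^ 2)) (polarCoord.symm p) =
        ENNReal.ofReal p.1 * g (p.1 ^ 2) * A.indicator 1 p.2 := by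
    rintro ⟨r, φ⟩ ⟨hr, -⟩
    have hsymm : polarCoord.symm (r, φ) = r • (cos φ, sin φ) := by
      simp [polarCoord_symm_apply]
    have hnorm : (r * cos φ) ^ 2 + (r * sin φ) ^ 2 = r ^ 2 := by
      rw [mul_pow, mul_pow, ← mul_add, cos_sq_add_sin_sq, mul_one]
    rw [hsymm]
    by_cases h : φ ∈ A
    · rw [indicator_of_mem ((hcone r hr _).mpr h), indicator_of_mem h]
      simp [hnorm]
    · rw [indicator_of_notMem (mt (hcone r hr _).mp h), indicator_of_notMem h]
      simp
  rw [← lintegral_indicator hW, ← lintegral_comp_polarCoord_symm,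
    setLIntegral_congr_fun polarCoord.open_target.measurableSet hpolar,
    show polarCoord.target = Ioi 0 ×ˢ Ioo (-π) π from rfl, Measure.volume_eq_prod,
    ← Measure.prod_restrict, lintegral_prod_mul (f := fun r => ENNReal.ofReal r * g (r ^ 2))
      (by fun_prop) (by fun_prop),
    lintegral_indicator_one hA, Measure.restrict_apply hA, inter_comm, angularMeasure]

theorem volume_ball_inter_cone_eq_mul_angularMeasure {κ : Type*} [Fintype κ] {W : Set (ℝ × ℝ)}
    (hW : MeasurableSet W) (hcone : IsCone W) :
    volume (ball (0 : EuclideanSpace ℝ (Fin 2 ⊕ κ)) 1 ∩ {y | (y (.inl 0), y (.inl 1)) ∈ W}) =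
      (∫⁻ r in Ioi 0, ENNReal.ofReal r * volume {z : κ → ℝ | r ^ 2 + ∑ i, z i ^ 2 < 1}) *
        angularMeasure W := by
  set Φ := fun y : EuclideanSpace ℝ (Fin 2 ⊕ κ) => ((y (.inl 0), y (.inl 1)), fun i => y (.inr i))
  have hΦ : MeasurePreserving Φ volume
      ((volume : Measure (ℝ × ℝ)).prod (volume : Measure (κ → ℝ))) :=
    ((volume_preserving_finTwoArrow ℝ).prod (MeasurePreserving.id volume)).comp
      ((volume_measurePreserving_sumPiEquivProdPi fun _ => ℝ).comp
        (EuclideanSpace.volume_preserving_symm_measurableEquiv_toLp _))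
  set G : ℝ → ℝ≥0∞ := fun t => volume {z : κ → ℝ | t + ∑ i, z i ^ 2 < 1}
  have hG : Measurable G := Antitone.measurable fun s t hst =>
    measure_mono fun z (hz : t + _ < 1) => show s + _ < 1 by linarith
  set S : Set ((ℝ × ℝ) × (κ → ℝ)) := {p | p.1 ∈ W ∧ p.1.1 ^ 2 + p.1.2 ^ 2 + ∑ i, p.2 i ^ 2 < 1}
  have hS : MeasurableSet S := (measurable_fst hW).inter <| measurableSet_lt
    (f := fun p : (ℝ × ℝ) × (κ → ℝ) => p.1.1 ^ 2 + p.1.2 ^ 2 + ∑ i, p.2 i ^ 2) (by fun_prop)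
    measurable_const
  have hpre : ball 0 1 ∩ {y | (y (.inl 0), y (.inl 1)) ∈ W} = Φ ⁻¹' S := by
    ext y
    rw [mem_inter_iff, mem_ball_zero_iff, ← sq_lt_one_iff₀ (norm_nonneg y),
      EuclideanSpace.norm_sq_eq, Fintype.sum_sum_type, Fin.sum_univ_two, and_comm]
    simp [Φ, S, sq_abs]
  have hslice : ∀ w, volume (Prod.mk w ⁻¹' S) = W.indicator (fun w => G (w.1 ^ 2 + w.2 ^ 2)) w := by
    intro w
    by_cases h : w ∈ W
    · simp [S, G, h]
    · simp [S, h]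
  rw [hpre, hΦ.measure_preimage hS.nullMeasurableSet, Measure.prod_apply hS,
    lintegral_congr hslice, lintegral_indicator hW, setLIntegral_cone_radial_eq_mul hW hcone hG]

theorem volume_ball_inter_cone_mul_two_pi {E : Type*} [NormedAddCommGroup E]
    [InnerProductSpace ℝ E] [FiniteDimensional ℝ E] [MeasurableSpace E] [BorelSpace E]
    {e : Fin 2 → E} (he : Orthonormal ℝ e) {W : Set (ℝ × ℝ)} (hW : MeasurableSet W)
    (hcone : IsCone W) :
    volume (ball (0 : E) 1 ∩ {x | (⟪e 0, x⟫, ⟪e 1, x⟫) ∈ W}) * ENNReal.ofReal (2 * π) =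
      angularMeasure W * volume (ball (0 : E) 1) := by
  set k := Module.finrank ℝ E - 2
  obtain ⟨b, hb⟩ : ∃ b : OrthonormalBasis (Fin 2 ⊕ Fin k) ℝ E, ∀ i, b (.inl i) = e i := by
    have hcard : Module.finrank ℝ E = Fintype.card (Fin 2 ⊕ Fin k) := by
      have := he.linearIndependent.fintype_card_le_finrank
      simp only [Fintype.card_sum, Fintype.card_fin] at this ⊢
      omega
    have hon : Orthonormal ℝ ((range Sum.inl).domRestrict (Sum.elim e 0 : Fin 2 ⊕ Fin k → E)) := by
      refine ⟨?_, ?_⟩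
      · rintro ⟨_, ⟨i, rfl⟩⟩
        exact he.1 i
      · rintro ⟨_, ⟨i, rfl⟩⟩ ⟨_, ⟨j, rfl⟩⟩ hij
        exact he.2 fun h => hij (by rw [h])
    obtain ⟨b, hb⟩ := hon.exists_orthonormalBasis_extension_of_card_eq hcard
    exact ⟨b, fun i => hb _ (mem_range_self i)⟩
  -- the radial factor is the same for `W` and for the whole plane, so it cancels
  have hvol : ∀ W' : Set (ℝ × ℝ), MeasurableSet W' → IsCone W' →
      volume (ball (0 : E) 1 ∩ {x | (⟪e 0, x⟫, ⟪e 1, x⟫) ∈ W'}) =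
        (∫⁻ r in Ioi 0, ENNReal.ofReal r * volume {z : Fin k → ℝ | r ^ 2 + ∑ i, z i ^ 2 < 1}) *
          angularMeasure W' := by
    intro W' hW' hcone'
    have hpre : ball (0 : E) 1 ∩ {x | (⟪e 0, x⟫, ⟪e 1, x⟫) ∈ W'} =
        b.repr ⁻¹' (ball 0 1 ∩ {y | (y (.inl 0), y (.inl 1)) ∈ W'}) := by
      ext x
      simp [b.repr_apply_apply, hb]
    have hmeas : MeasurableSet (ball (0 : EuclideanSpace ℝ (Fin 2 ⊕ Fin k)) 1 ∩
        {y | (y (.inl 0), y (.inl 1)) ∈ W'}) :=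
      measurableSet_ball.inter <|
        (by fun_prop : Measurable fun y : EuclideanSpace ℝ (Fin 2 ⊕ Fin k) =>
          (y (.inl 0), y (.inl 1))) hW'
    rw [hpre, b.measurePreserving_repr.measure_preimage hmeas.nullMeasurableSet,
      volume_ball_inter_cone_eq_mul_angularMeasure hW' hcone']
  have hball := hvol univ MeasurableSet.univ fun _ _ _ => Iff.rfl
  simp only [mem_univ, ofPred_true, inter_univ, angularMeasure, volume_Ioo, sub_neg_eq_add]
    at hball
  rw [hvol W hW hcone, hball, two_mul]
  ring

theorem MeasureTheory.Measure.toSphere_preimage_coe_of_isCone {E : Type*} [NormedAddCommGroup E]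
    [NormedSpace ℝ E] [MeasurableSpace E] [BorelSpace E] (μ : Measure E) {C : Set E}
    (hC : MeasurableSet C) (hcone : IsCone C) (h0 : (0 : E) ∉ C) :
    μ.toSphere (Subtype.val ⁻¹' C) = Module.finrank ℝ E * μ (ball 0 1 ∩ C) := by
  rw [μ.toSphere_apply' (hC.preimage measurable_subtype_coe)]
  congr 2
  ext x
  simp only [Subtype.image_preimage_coe, mem_smul, mem_inter_iff, mem_ball_zero_iff]
  constructor
  · rintro ⟨r, hr, y, ⟨hy, hyC⟩, rfl⟩
    rw [mem_sphere_zero_iff_norm] at hy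
    rw [norm_smul, hy, mul_one, Real.norm_eq_abs, abs_of_pos hr.1]
    exact ⟨hr.2, (hcone r hr.1 y).mpr hyC⟩
  · rintro ⟨hx, hxC⟩
    have hx0 : ‖x‖ ≠ 0 := norm_ne_zero_iff.mpr fun h => h0 (h ▸ hxC)
    refine ⟨‖x‖, ⟨by positivity, hx⟩, ‖x‖⁻¹ • x, ⟨?_, (hcone _ (by positivity) x).mpr hxC⟩,
      smul_inv_smul₀ hx0 x⟩
    rw [mem_sphere_zero_iff_norm, norm_smul, norm_inv, norm_norm, inv_mul_cancel₀ hx0]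

def doubleWedge (α : ℝ) : Set (ℝ × ℝ) :=
  {w | 0 ≤ cos α * w.1 - sin α * w.2} ∆ {w | 0 ≤ cos α * w.1 + sin α * w.2}

theorem measurableSet_doubleWedge (α : ℝ) : MeasurableSet (doubleWedge α) :=
  (measurableSet_le measurable_const (by fun_prop)).symmDiff
    (measurableSet_le measurable_const (by fun_prop))

theorem isCone_doubleWedge (α : ℝ) : IsCone (doubleWedge α) := by
  intro r hr w
  simp only [doubleWedge, mem_symmDiff, mem_ofPred_eq, Prod.smul_fst, Prod.smul_snd, smul_eq_mul]
  rw [show ∀ a b : ℝ, a * (r * w.1) - b * (r * w.2) = r * (a * w.1 - b * w.2) by intros; ring,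
    show ∀ a b : ℝ, a * (r * w.1) + b * (r * w.2) = r * (a * w.1 + b * w.2) by intros; ring,
    mul_nonneg_iff_of_pos_left hr, mul_nonneg_iff_of_pos_left hr]

theorem zero_notMem_doubleWedge (α : ℝ) : (0 : ℝ × ℝ) ∉ doubleWedge α := by
  simp [doubleWedge, mem_symmDiff]

theorem angularMeasure_doubleWedge {α : ℝ} (h0 : 0 ≤ α) (hα : α ≤ π / 2) :
    angularMeasure (doubleWedge α) = ENNReal.ofReal (4 * α) := by
  have hset : {φ | (cos φ, sin φ) ∈ doubleWedge α} =
      {φ | 0 ≤ cos (φ + α)} ∆ {φ | 0 ≤ cos (φ - α)} := by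
    ext φ
    simp only [doubleWedge, mem_symmDiff, mem_ofPred_eq, cos_add, cos_sub]
    ring_nf
  rw [angularMeasure, hset, volume_Ioo_inter_cos_nonneg_symmDiff h0 hα]

section Geometry

variable {E : Type*} [NormedAddCommGroup E] [InnerProductSpace ℝ E]

theorem exists_norm_eq_one_inner_eq_zero [FiniteDimensional ℝ E] (hE : 2 ≤ Module.finrank ℝ E)
    {x : E} (hx : x ≠ 0) : ∃ e : E, ‖e‖ = 1 ∧ ⟪x, e⟫ = 0 := by
  have hpos : 0 < Module.finrank ℝ (ℝ ∙ x)ᗮ := by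
    have := Submodule.finrank_add_finrank_orthogonal (ℝ ∙ x)
    rw [finrank_span_singleton hx] at this
    omega
  obtain ⟨z, hz⟩ := Module.finrank_pos_iff_exists_ne_zero.mp hpos
  have hz' : (z : E) ≠ 0 := by simpa using hz
  refine ⟨‖(z : E)‖⁻¹ • (z : E), norm_smul_inv_norm hz', ?_⟩
  rw [real_inner_smul_right, Submodule.mem_orthogonal_singleton_iff_inner_right.mp z.2, mul_zero]

theorem exists_eq_cos_angle_smul_add_sin_angle_smul [FiniteDimensional ℝ E]
    (hE : 2 ≤ Module.finrank ℝ E) {x y : E} (hx : ‖x‖ = 1) (hy : ‖y‖ = 1) :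
    ∃ e : E, ‖e‖ = 1 ∧ ⟪x, e⟫ = 0 ∧ y = cos (angle x y) • x + sin (angle x y) • e := by
  set θ := angle x y
  set w := y - cos θ • x
  have hcos : ⟪x, y⟫ = cos θ := inner_eq_cos_angle_of_norm_eq_one hx hy
  have hxw : ⟪x, w⟫ = 0 := by
    simp [w, inner_sub_right, real_inner_smul_right, hx, hcos]
  have hw : ‖w‖ = sin θ := by
    have hsq : ‖w‖ ^ 2 = sin θ ^ 2 := by
      rw [norm_sub_sq_real, real_inner_smul_right, real_inner_comm x y, hcos, norm_smul, hx, hy,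
        Real.norm_eq_abs, mul_one, sq_abs, sin_sq]
      ring
    rwa [sq_eq_sq₀ (norm_nonneg w) (sin_angle_nonneg x y)] at hsq
  by_cases hs : sin θ = 0
  · obtain ⟨e, he, hxe⟩ :=
      exists_norm_eq_one_inner_eq_zero hE (norm_ne_zero_iff.mp (hx ▸ one_ne_zero))
    refine ⟨e, he, hxe, ?_⟩
    rw [hs, zero_smul, add_zero, ← sub_eq_zero]
    exact norm_eq_zero.mp (hw.trans hs)
  · refine ⟨(sin θ)⁻¹ • w, ?_, ?_, ?_⟩
    · rw [norm_smul, hw, norm_inv, Real.norm_eq_abs, abs_of_nonneg (sin_angle_nonneg x y),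
        inv_mul_cancel₀ hs]
    · rw [real_inner_smul_right, hxw, mul_zero]
    · rw [smul_inv_smul₀ hs, add_sub_cancel]

theorem exists_orthonormal_eq_cos_smul_sub_sin_smul [FiniteDimensional ℝ E]
    (hE : 2 ≤ Module.finrank ℝ E) {x y : E} (hx : ‖x‖ = 1) (hy : ‖y‖ = 1) :
    ∃ f : Fin 2 → E, Orthonormal ℝ f ∧
      x = cos (angle x y / 2) • f 0 - sin (angle x y / 2) • f 1 ∧
      y = cos (angle x y / 2) • f 0 + sin (angle x y / 2) • f 1 := by
  obtain ⟨e, he, hxe, hy⟩ := exists_eq_cos_angle_smul_add_sin_angle_smul hE hx hy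
  set c := cos (angle x y / 2)
  set s := sin (angle x y / 2)
  have hcs : s ^ 2 + c ^ 2 = 1 := sin_sq_add_cos_sq _
  have hcos : cos (angle x y) = c ^ 2 - s ^ 2 := by
    rw [← mul_div_cancel₀ (angle x y) two_ne_zero, cos_two_mul]
    linear_combination hcs
  have hsin : sin (angle x y) = 2 * s * c := by
    rw [← mul_div_cancel₀ (angle x y) two_ne_zero, sin_two_mul]
  refine ⟨![c • x + s • e, -s • x + c • e], ?_, ?_, ?_⟩
  · rw [orthonormal_iff_ite]
    have hex : ⟪e, x⟫ = 0 := by rw [real_inner_comm, hxe]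
    simp only [Fin.forall_fin_two, Matrix.cons_val_zero, Matrix.cons_val_one, inner_add_left,
      inner_add_right, real_inner_smul_left, real_inner_smul_right, real_inner_self_eq_norm_sq,
      hx, he, hxe, hex]
    norm_num
    exact ⟨⟨by linear_combination hcs, by ring⟩, by ring, by linear_combination hcs⟩
  · simp only [Matrix.cons_val_zero, Matrix.cons_val_one]
    linear_combination (norm := module) hcs.symm • x
  · rw [hy, hcos, hsin]
    simp only [Matrix.cons_val_zero, Matrix.cons_val_one]
    module

theorem inner_inv_norm_smul_nonneg_iff {x : E} (hx : x ≠ 0) (z : E) :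
    0 ≤ ⟪z, ‖x‖⁻¹ • x⟫ ↔ 0 ≤ ⟪z, x⟫ := by
  rw [real_inner_smul_right, mul_nonneg_iff_of_pos_left (by positivity)]

end Geometry

theorem isProbabilityMeasure_unifSphere {n : ℕ} (hn : n ≠ 0) :
    IsProbabilityMeasure (unifSphere n) := by
  constructor
  rw [unifSphere, Measure.smul_apply, smul_eq_mul, Measure.toSphere_apply_univ]
  exact ENNReal.inv_mul_cancel (mul_ne_zero (by simpa using hn) (measure_ball_pos _ _ one_pos).ne')
    (ENNReal.mul_ne_top (ENNReal.natCast_ne_top _) measure_ball_lt_top.ne)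

theorem unifSphere_preimage_coe_of_isCone {n : ℕ} (hn : n ≠ 0) {C : Set (Euc n)}
    (hC : MeasurableSet C) (hcone : IsCone C) (h0 : (0 : Euc n) ∉ C) :
    unifSphere n (Subtype.val ⁻¹' C) = volume (ball 0 1 ∩ C) / volume (ball (0 : Euc n) 1) := by
  rw [unifSphere, Measure.smul_apply, smul_eq_mul, Measure.toSphere_apply_univ,
    volume.toSphere_preimage_coe_of_isCone hC hcone h0, ← ENNReal.div_eq_inv_mul,
    ENNReal.mul_div_mul_left _ _ (by simpa using hn) (ENNReal.natCast_ne_top _)]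

theorem measurable_angHash {n : ℕ} (x : Euc n) : Measurable fun a : Euc n => angHash a x :=
  Measurable.ite (measurableSet_le measurable_const (by fun_prop)) measurable_const measurable_const

theorem angHash_ne_angHash_iff {n : ℕ} (a x y : Euc n) :
    angHash a x ≠ angHash a y ↔ a ∈ {z | 0 ≤ ⟪z, x⟫} ∆ {z | 0 ≤ ⟪z, y⟫} := by
  unfold angHash
  split_ifs <;> simp_all [mem_symmDiff]

theorem setOf_angHash_ne_eq_doubleWedge {n : ℕ} {u v : Euc n} (hu : u ≠ 0) (hv : v ≠ 0)
    {f : Fin 2 → Euc n} {α : ℝ} (hu₁ : ‖u‖⁻¹ • u = cos α • f 0 - sin α • f 1)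
    (hv₁ : ‖v‖⁻¹ • v = cos α • f 0 + sin α • f 1) :
    {a : Euc n | angHash a u ≠ angHash a v} = {x | (⟪f 0, x⟫, ⟪f 1, x⟫) ∈ doubleWedge α} := by
  have hu' : ∀ z, 0 ≤ ⟪z, u⟫ ↔ 0 ≤ cos α * ⟪f 0, z⟫ - sin α * ⟪f 1, z⟫ := fun z => by
    rw [← inner_inv_norm_smul_nonneg_iff hu, hu₁, inner_sub_right, real_inner_smul_right,
      real_inner_smul_right, real_inner_comm z, real_inner_comm z]
  have hv' : ∀ z, 0 ≤ ⟪z, v⟫ ↔ 0 ≤ cos α * ⟪f 0, z⟫ + sin α * ⟪f 1, z⟫ := fun z => by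
    rw [← inner_inv_norm_smul_nonneg_iff hv, hv₁, inner_add_right, real_inner_smul_right,
      real_inner_smul_right, real_inner_comm z, real_inner_comm z]
  ext a
  rw [mem_ofPred_eq, angHash_ne_angHash_iff]
  simp only [mem_symmDiff, mem_ofPred_eq, doubleWedge, hu', hv']

theorem unifSphere_angHash_ne {n : ℕ} (hn : 2 ≤ n) {u v : Euc n} (hu : u ≠ 0) (hv : v ≠ 0) :
    unifSphere n {a | angHash (a : Euc n) u ≠ angHash (a : Euc n) v} =
      ENNReal.ofReal (angle u v / π) := by
  have hnu : ‖‖u‖⁻¹ • u‖ = 1 := norm_smul_inv_norm hu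
  have hnv : ‖‖v‖⁻¹ • v‖ = 1 := norm_smul_inv_norm hv
  obtain ⟨f, hf, hu₁, hv₁⟩ :=
    exists_orthonormal_eq_cos_smul_sub_sin_smul (by simpa using hn) hnu hnv
  rw [angle_smul_left_of_pos u _ (by positivity), angle_smul_right_of_pos u v (by positivity)]
    at hu₁ hv₁
  set α := angle u v / 2
  set C := {x : Euc n | (⟪f 0, x⟫, ⟪f 1, x⟫) ∈ doubleWedge α}
  have hC : MeasurableSet C :=
    (by fun_prop : Measurable fun x : Euc n => (⟪f 0, x⟫, ⟪f 1, x⟫)) (measurableSet_doubleWedge α)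
  have hconeC : IsCone C := fun r hr x => by
    simp only [C, mem_ofPred_eq, real_inner_smul_right]
    exact isCone_doubleWedge α r hr (⟪f 0, x⟫, ⟪f 1, x⟫)
  have h0C : (0 : Euc n) ∉ C := by
    simp only [C, mem_ofPred_eq, inner_zero_right]
    exact zero_notMem_doubleWedge α
  have hvol := volume_ball_inter_cone_mul_two_pi hf (measurableSet_doubleWedge α)
    (isCone_doubleWedge α)
  rw [angularMeasure_doubleWedge (div_nonneg (angle_nonneg u v) zero_le_two)
    (div_le_div_of_nonneg_right (angle_le_pi u v) zero_le_two)] at hvol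
  have hset : {a : sphere (0 : Euc n) 1 | angHash (a : Euc n) u ≠ angHash (a : Euc n) v} =
      Subtype.val ⁻¹' C :=
    congrArg (Subtype.val ⁻¹' ·) (setOf_angHash_ne_eq_doubleWedge hu hv hu₁ hv₁)
  rw [hset,
    unifSphere_preimage_coe_of_isCone (by omega) hC hconeC h0C,
    show angle u v / π = 4 * α / (2 * π) by ring, ENNReal.ofReal_div_of_pos (by positivity),
    ENNReal.div_eq_div_iff (by simp [pi_pos]) ENNReal.ofReal_ne_top
      (measure_ball_pos _ _ one_pos).ne' measure_ball_lt_top.ne, mul_comm, hvol, mul_comm]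

theorem angular_hash_sign_disagreement_prob {n : ℕ} (hn : 2 ≤ n)
    (u v : Euc n) (hu : u ≠ 0) (hv : v ≠ 0)
    (θ : ℝ) (hθ : θ = Real.arccos ((inner ℝ u v : ℝ) / (‖u‖ * ‖v‖))) :
    unifSphere n {a : Metric.sphere (0 : Euc n) 1 |
        angHash (a : Euc n) u ≠ angHash (a : Euc n) v} = ENNReal.ofReal (θ / Real.pi) ∧
      ∀ θ₁ θ₂ : ℝ, θ₁ < θ₂ →
        (θ ≤ θ₁ →
          ENNReal.ofReal (1 - θ₁ / Real.pi) ≤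
            unifSphere n {a : Metric.sphere (0 : Euc n) 1 |
              angHash (a : Euc n) u = angHash (a : Euc n) v}) ∧
        (θ₂ ≤ θ →
          unifSphere n {a : Metric.sphere (0 : Euc n) 1 |
              angHash (a : Euc n) u = angHash (a : Euc n) v} ≤
            ENNReal.ofReal (1 - θ₂ / Real.pi)) := by
  obtain rfl : θ = angle u v := hθ
  have := isProbabilityMeasure_unifSphere (n := n) (by omega)
  have hA : MeasurableSet
      {a : sphere (0 : Euc n) 1 | angHash (a : Euc n) u = angHash (a : Euc n) v} :=
    measurableSet_eq_fun ((measurable_angHash u).comp measurable_subtype_coe)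
      ((measurable_angHash v).comp measurable_subtype_coe)
  have hdis := unifSphere_angHash_ne hn hu hv
  have hagree : unifSphere n
      {a : sphere (0 : Euc n) 1 | angHash (a : Euc n) u = angHash (a : Euc n) v} =
      ENNReal.ofReal (1 - angle u v / π) := by
    rw [← compl_compl {a : sphere (0 : Euc n) 1 | _}, prob_compl_eq_one_sub hA.compl,
      compl_ofPred, hdis, ← ENNReal.ofReal_one,
      ENNReal.ofReal_sub _ (div_nonneg (angle_nonneg u v) pi_pos.le)]
  refine ⟨hdis, fun θ₁ θ₂ _ => ⟨fun h₁ => ?_, fun h₂ => ?_⟩⟩ <;> rw [hagree] <;>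
    exact ENNReal.ofReal_le_ofReal (by gcongr)
end
end
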